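/- Every automorphism φ of the free group F₂ such that φ(a) and φ(b) are positive words and φ fixes the commutator exactly, φ(a·b·a⁻¹·b⁻¹) = a·b·a⁻¹·b⁻¹, is a finite composition of copies of T̂₁ and T̂₂ (the identity corresponding to the empty composition). -/

import Mathlib

/-- The free group on two generators. -/
abbrev F2 := FreeGroup (Fin 2)

/-- The first generator `a` of `F₂`. -/
def a : F2 := FreeGroup.of 0

/-- The second generator `b` of `F₂`. -/
def b : F2 := FreeGroup.of 1

/-- The commutator `κ = a·b·a⁻¹·b⁻¹`. -/
def kappa : F2 := a * b * a⁻¹ * b⁻¹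

/-- An element of `F₂` is a positive word if it lies in the submonoid generated by the
generators `a` and `b`. -/
def IsPositiveWord (x : F2) : Prop := x ∈ Submonoid.closure ({a, b} : Set F2)

/-- The endomorphism `T̂₁` of `F₂` determined by `a ↦ a·b`, `b ↦ b`. -/
def T1hat : Monoid.End F2 := FreeGroup.lift fun i => if i = 0 then a * b else b

/-- The endomorphism `T̂₂` of `F₂` determined by `a ↦ a`, `b ↦ b·a`. -/
def T2hat : Monoid.End F2 := FreeGroup.lift fun i => if i = 0 then a else b * a

/-!
Write `φ a = U` and `φ b = V` as positive words, so that `⁅U, V⁆ = κ`. If `V` is a suffix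
of `U`, say `U = U' V`, then `⁅U', V⁆ = ⁅U, V⁆ = κ` and `φ = φ' ∘ T̂₁` with `φ' : a ↦ U', b ↦ V`;
symmetrically `φ = φ' ∘ T̂₂` when `U` is a suffix of `V`. Otherwise `U = U₀ x S` and `V = V₀ y S`
with letters `x ≠ y`, and `⁅U, V⁆ = (U₀ x S V₀ y) (V₀ y S U₀ x)⁻¹` is already reduced; comparing it
with the reduced word of `κ` forces `U = a` and `V = b`, i.e. `φ = 1`. Induction on `|U| + |V|`.
-/

open scoped commutatorElement

section Commutator

variable {G : Type*} [Group G]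

theorem commutatorElement_mul_self_left (x y : G) : ⁅x * y, y⁆ = ⁅x, y⁆ := by
  simp only [commutatorElement_def]; group

theorem commutatorElement_mul_self_right (x y : G) : ⁅x, y * x⁆ = ⁅x, y⁆ := by
  simp only [commutatorElement_def]; group

end Commutator

namespace List

variable {α : Type*}

theorem exists_eq_append_cons_of_not_prefix : ∀ {u v : List α}, ¬u <+: v → ¬v <+: u →
    ∃ p x y u' v', x ≠ y ∧ u = p ++ x :: u' ∧ v = p ++ y :: v'
  | [], _, hu, _ => absurd nil_prefix hu
  | _ :: _, [], _, hv => absurd nil_prefix hv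
  | x :: u, y :: v, hu, hv => by
    by_cases hxy : x = y
    · subst hxy
      obtain ⟨p, x', y', u', v', hne, rfl, rfl⟩ := exists_eq_append_cons_of_not_prefix
        (mt (prefix_cons_inj x).2 hu) (mt (prefix_cons_inj x).2 hv)
      exact ⟨x :: p, x', y', u', v', hne, rfl, rfl⟩
    · exact ⟨[], x, y, u, v, hxy, rfl, rfl⟩

theorem exists_eq_append_cons_of_not_suffix {u v : List α} (hu : ¬u <:+ v) (hv : ¬v <:+ u) :
    ∃ u₀ v₀ s x y, x ≠ y ∧ u = u₀ ++ x :: s ∧ v = v₀ ++ y :: s := by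
  rw [← reverse_prefix] at hu hv
  obtain ⟨p, x, y, u', v', hne, hu', hv'⟩ := exists_eq_append_cons_of_not_prefix hu hv
  refine ⟨u'.reverse, v'.reverse, p.reverse, x, y, hne, ?_, ?_⟩
  · simpa using congrArg reverse hu'
  · simpa using congrArg reverse hv'

end List

namespace FreeGroup

variable {α : Type*}

def positiveWord (l : List α) : FreeGroup α := mk (l.map (·, true))

@[simp]
theorem positiveWord_nil : positiveWord ([] : List α) = 1 := rfl

@[simp]
theorem positiveWord_singleton (x : α) : positiveWord [x] = of x := rfl

@[simp]
theorem positiveWord_cons (x : α) (l : List α) :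
    positiveWord (x :: l) = of x * positiveWord l := by
  simp [positiveWord, of, mul_mk]

@[simp]
theorem positiveWord_append (u v : List α) :
    positiveWord (u ++ v) = positiveWord u * positiveWord v := by
  simp [positiveWord, mul_mk]

theorem exists_positiveWord_eq_of_mem_closure {g : FreeGroup α}
    (hg : g ∈ Submonoid.closure (Set.range of)) : ∃ l, positiveWord l = g := by
  induction hg using Submonoid.closure_induction with
  | mem _ hx => obtain ⟨x, rfl⟩ := hx; exact ⟨[x], rfl⟩
  | one => exact ⟨[], rfl⟩
  | mul _ _ _ _ hg hh =>
    obtain ⟨l, rfl⟩ := hg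
    obtain ⟨m, rfl⟩ := hh
    exact ⟨l ++ m, positiveWord_append l m⟩

theorem toWord_positiveWord_mul_inv [DecidableEq α] {p q : List α}
    (h : p.getLast? ≠ q.getLast?) :
    (positiveWord p * (positiveWord q)⁻¹).toWord =
      p.map (·, true) ++ q.reverse.map (·, false) := by
  have hinv : invRev (q.map (·, true)) = q.reverse.map (·, false) := by
    simp [invRev, List.map_reverse]
  rw [positiveWord, positiveWord, inv_mk, mul_mk, toWord_mk, hinv]
  refine IsReduced.reduce_eq (List.isChain_append.2 ⟨?_, ?_, ?_⟩)
  · simpa [List.isChain_map] using List.isChain_iff_getElem.2 fun _ _ => trivial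
  · simpa [List.isChain_map, List.isChain_reverse] using
      List.isChain_iff_getElem.2 fun _ _ => trivial
  · intro _ hx _ hy hxy
    simp only [List.getLast?_map, List.head?_map, List.head?_reverse, Option.mem_def,
      Option.map_eq_some_iff] at hx hy
    obtain ⟨x, hpx, rfl⟩ := hx
    obtain ⟨y, hqy, rfl⟩ := hy
    obtain rfl : x = y := hxy
    exact absurd (hpx.trans hqy.symm) h

end FreeGroup

open FreeGroup

theorem kappa_eq_commutatorElement : kappa = ⁅a, b⁆ := rfl

theorem kappa_ne_one : kappa ≠ 1 := by decide

theorem toWord_kappa : kappa.toWord = [(0, true), (1, true), (0, false), (1, false)] := by decide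

theorem IsPositiveWord.exists_positiveWord_eq {g : F2} (hg : IsPositiveWord g) :
    ∃ l, positiveWord l = g := by
  have hab : ({a, b} : Set F2) = Set.range of := by
    ext; simp [a, b, Fin.exists_fin_two, eq_comm]
  rw [IsPositiveWord, hab] at hg
  exact exists_positiveWord_eq_of_mem_closure hg

theorem eq_singleton_of_commutatorElement_eq_kappa {u₀ v₀ s : List (Fin 2)} {x y : Fin 2}
    (hxy : x ≠ y) (h : ⁅positiveWord (u₀ ++ x :: s), positiveWord (v₀ ++ y :: s)⁆ = kappa) :
    u₀ ++ x :: s = [0] ∧ v₀ ++ y :: s = [1] := by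
  have hword := toWord_positiveWord_mul_inv (p := u₀ ++ x :: s ++ v₀ ++ [y])
    (q := v₀ ++ y :: s ++ u₀ ++ [x])
    (by rw [List.getLast?_concat, List.getLast?_concat]
        exact fun h => hxy (Option.some_inj.1 h).symm)
  -- the common suffix `s` cancels in the middle of the commutator
  have hκ : positiveWord (u₀ ++ x :: s ++ v₀ ++ [y]) *
      (positiveWord (v₀ ++ y :: s ++ u₀ ++ [x]))⁻¹ = kappa := by
    simp only [positiveWord_append, positiveWord_cons, positiveWord_nil, commutatorElement_def]
      at h ⊢
    rw [← h]
    group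
  rw [hκ, toWord_kappa] at hword
  have hlen := congrArg List.length hword
  simp only [List.length_append, List.length_map, List.length_reverse, List.length_cons,
    List.length_nil] at hlen
  obtain ⟨rfl, rfl, rfl⟩ : u₀ = [] ∧ s = [] ∧ v₀ = [] := by
    simp only [← List.length_eq_zero_iff]; omega
  obtain ⟨rfl, rfl, -⟩ : 0 = x ∧ 1 = y ∧ _ := by simpa using hword
  exact ⟨rfl, rfl⟩

theorem monoidEnd_ext {φ ψ : Monoid.End F2} (ha : φ a = ψ a) (hb : φ b = ψ b) : φ = ψ :=
  FreeGroup.ext_hom _ _ (Fin.forall_fin_two.2 ⟨ha, hb⟩)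

def endOfPair (x y : F2) : Monoid.End F2 := FreeGroup.lift ![x, y]

@[simp]
theorem endOfPair_apply_a (x y : F2) : endOfPair x y a = x := lift_apply_of

@[simp]
theorem endOfPair_apply_b (x y : F2) : endOfPair x y b = y := lift_apply_of

@[simp]
theorem T1hat_apply_a : T1hat a = a * b := lift_apply_of

@[simp]
theorem T1hat_apply_b : T1hat b = b := lift_apply_of

@[simp]
theorem T2hat_apply_a : T2hat a = a := lift_apply_of

@[simp]
theorem T2hat_apply_b : T2hat b = b * a := lift_apply_of

theorem eq_endOfPair (φ : Monoid.End F2) : φ = endOfPair (φ a) (φ b) :=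
  monoidEnd_ext (by simp) (by simp)

theorem endOfPair_a_b : endOfPair a b = 1 :=
  monoidEnd_ext (by simp) (by simp)

theorem endOfPair_mul_T1hat (x y : F2) : endOfPair x y * T1hat = endOfPair (x * y) y :=
  monoidEnd_ext (by simp) (by simp)

theorem endOfPair_mul_T2hat (x y : F2) : endOfPair x y * T2hat = endOfPair x (y * x) :=
  monoidEnd_ext (by simp) (by simp)

theorem endOfPair_positiveWord_mem_closure (u v : List (Fin 2))
    (h : ⁅positiveWord u, positiveWord v⁆ = kappa) :
    endOfPair (positiveWord u) (positiveWord v) ∈ Submonoid.closure {T1hat, T2hat} := by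
  have hu : u ≠ [] := by rintro rfl; simp [eq_comm, kappa_ne_one] at h
  have hv : v ≠ [] := by rintro rfl; simp [eq_comm, kappa_ne_one] at h
  by_cases hvu : v <:+ u
  · obtain ⟨t, rfl⟩ := hvu
    rw [positiveWord_append, commutatorElement_mul_self_left] at h
    rw [positiveWord_append, ← endOfPair_mul_T1hat]
    exact mul_mem (endOfPair_positiveWord_mem_closure t v h)
      (Submonoid.subset_closure (by simp))
  by_cases huv : u <:+ v
  · obtain ⟨t, rfl⟩ := huv
    rw [positiveWord_append, commutatorElement_mul_self_right] at h
    rw [positiveWord_append, ← endOfPair_mul_T2hat]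
    exact mul_mem (endOfPair_positiveWord_mem_closure u t h)
      (Submonoid.subset_closure (by simp))
  obtain ⟨u₀, v₀, s, x, y, hxy, rfl, rfl⟩ := List.exists_eq_append_cons_of_not_suffix huv hvu
  obtain ⟨hU, hV⟩ := eq_singleton_of_commutatorElement_eq_kappa hxy h
  rw [hU, hV, positiveWord_singleton, positiveWord_singleton]
  exact endOfPair_a_b ▸ one_mem _
termination_by u.length + v.length
decreasing_by
  all_goals subst_vars; grind [List.length_pos_iff]

theorem automorphism_positive_fixing_kappa_eq_comp_T1hat_T2hat_general
    (φ : Monoid.End F2)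
    (ha : IsPositiveWord (φ a)) (hb : IsPositiveWord (φ b))
    (hκ : φ kappa = kappa) :
    ∃ L : List (Monoid.End F2),
      (∀ ψ ∈ L, ψ = T1hat ∨ ψ = T2hat) ∧ L.prod = φ := by
  obtain ⟨u, hu⟩ := ha.exists_positiveWord_eq
  obtain ⟨v, hv⟩ := hb.exists_positiveWord_eq
  have h : ⁅positiveWord u, positiveWord v⁆ = kappa := by
    rw [hu, hv, ← map_commutatorElement, ← kappa_eq_commutatorElement, hκ]
  rw [eq_endOfPair φ, ← hu, ← hv]
  exact Submonoid.exists_list_of_mem_closure (endOfPair_positiveWord_mem_closure u v h)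

/-- Every automorphism `φ` of `F₂` sending both generators to positive words and fixing
the commutator `κ` exactly is a finite composition of copies of `T̂₁` and `T̂₂` (the
identity corresponding to the empty composition; in `Monoid.End F₂` the product of a list
is the composition of its members). -/
theorem automorphism_positive_fixing_kappa_eq_comp_T1hat_T2hat
    (φ : Monoid.End F2) (hbij : Function.Bijective φ)
    (ha : IsPositiveWord (φ a)) (hb : IsPositiveWord (φ b))
    (hκ : φ kappa = kappa) :
    ∃ L : List (Monoid.End F2),
      (∀ ψ ∈ L, ψ = T1hat ∨ ψ = T2hat) ∧ L.prod = φ :=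
  automorphism_positive_fixing_kappa_eq_comp_T1hat_T2hat_general φ ha hb hκ
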